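/- Let G = (N, Act, R) be a first-order grammar, let E, F be terms over N and σ a substitution, and suppose eqlevel(E,F) = k ∈ ℕ while eqlevel(Eσ,Fσ) = e with k < e (e ∈ ℕ ∪ {ω}). Then there exist a variable x_i ∈ supp(σ), a term H with H ≠ x_i, and a word w over Act with |w| ≤ k, such that either (E →w x_i and F →w H) or (E →w H and F →w x_i) in L^act_G (using no special variable transitions x →a_x x), and moreover x_iσ ∼_{e−k} Hσ (with the convention ω − k = ω). -/

import Mathlib

/-!
Induction on `k = eqlevel(E, F)`. If `E` (say) is a variable `x_i`, the empty word works with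
`H = F`, unless `σ` fixes `x_i`; then `x_i ∼_1 Fσ` forces `F = x_j` with `x_jσ = x_i`, and the
roles of `x_i` and `x_j` swap. Otherwise `E` and `F` are rooted by nonterminals, so
`E ≁_{k+1} F` yields a step `E →a E'` (or symmetrically from `F`) that no `F →a F'` matches up to
`∼_k`, whence `eqlevel(E', F') < k`. Root steps of such terms commute with substitution and
`L^act_G` is image-finite, so some `F →a F'` satisfies
`eqlevel(Eσ, Fσ) ≤ eqlevel(E'σ, F'σ) + 1`; the induction hypothesis for `(E', F')`, prefixed by
`a`, gives the claim.
-/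

/-- The "signature" of a first-order grammar: a finite set of ranked nonterminals
(represented as `Fin ntCount`, with arities) and a finite set of actions
(represented as `Fin actCount`). -/
structure GrammarSig where
  ntCount : ℕ
  arity : Fin ntCount → ℕ
  actCount : ℕ

/-- The polynomial functor whose coinductive fixed point is the set of (finite or
infinite) terms over the nonterminals: a node is labelled either by a nonterminal
`A` (with `arity A` ordered children) or by a variable `x_n`, `n : ℕ` (a leaf). -/
def GrammarSig.P (S : GrammarSig) : PFunctor :=
  ⟨Fin S.ntCount ⊕ ℕ, fun l =>
    match l with
    | Sum.inl A => Fin (S.arity A)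
    | Sum.inr _ => Empty⟩

/-- Terms over the signature `S`: finite or infinite ordered trees with nodes labelled
by nonterminals (inner nodes) or variables (leaves). -/
def GTerm (S : GrammarSig) := PFunctor.M S.P

/-- The term consisting of the single variable `x_n`. -/
def GTerm.var (S : GrammarSig) (n : ℕ) : GTerm S :=
  PFunctor.M.mk ⟨Sum.inr n, fun e => e.elim⟩

/-- The term `A(c 0, …, c (m-1))`. -/
def GTerm.app {S : GrammarSig} (A : Fin S.ntCount) (c : Fin (S.arity A) → GTerm S) :
    GTerm S :=
  PFunctor.M.mk ⟨Sum.inl A, c⟩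

/-- Applying a substitution `σ` to a term `T`: every occurrence of a variable `x_n`
in `T` is replaced by `σ n` (defined corecursively). -/
def GTerm.subst {S : GrammarSig} (σ : ℕ → GTerm S) (T : GTerm S) : GTerm S :=
  PFunctor.M.corec
    (fun st : Bool × GTerm S =>
      match PFunctor.M.dest st.2 with
      | ⟨Sum.inl A, c⟩ => ⟨Sum.inl A, fun i => (st.1, c i)⟩
      | ⟨Sum.inr n, _⟩ =>
        if st.1 then
          ⟨(PFunctor.M.dest (σ n)).1, fun i => (false, (PFunctor.M.dest (σ n)).2 i)⟩
        else ⟨Sum.inr n, fun e => e.elim⟩)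
    (true, T)

/-- A substitution (as a total map `ℕ → GTerm S`) has finite support. -/
def FinSupp {S : GrammarSig} (σ : ℕ → GTerm S) : Prop :=
  {n | σ n ≠ GTerm.var S n}.Finite

/-- `childRel S T T'`: `T'` is a root-successor (depth-1 subterm occurrence) of `T`. -/
def childRel (S : GrammarSig) : GTerm S → GTerm S → Prop := fun T T' =>
  ∃ (A : Fin S.ntCount) (c : Fin (S.arity A) → GTerm S), T = GTerm.app A c ∧ ∃ i, T' = c i

/-- `T'` is a subterm of `T`. -/
def SubtermOf (S : GrammarSig) (T' T : GTerm S) : Prop :=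
  Relation.ReflTransGen (childRel S) T T'

/-- The variable `x_n` occurs in `T`. -/
def VarOccurs (S : GrammarSig) (n : ℕ) (T : GTerm S) : Prop :=
  SubtermOf S (GTerm.var S n) T

/-- `OccAtDepth S d T V`: `V` has a subterm-occurrence in `T` at depth `d`. -/
inductive OccAtDepth (S : GrammarSig) : ℕ → GTerm S → GTerm S → Prop
  | refl (T : GTerm S) : OccAtDepth S 0 T T
  | step {d : ℕ} {T T' V : GTerm S} :
      childRel S T T' → OccAtDepth S d T' V → OccAtDepth S (d + 1) T V

/-- A term is regular if it has only finitely many distinct subterms. -/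
def RegularT (S : GrammarSig) (T : GTerm S) : Prop := {T' | SubtermOf S T' T}.Finite

/-- The presentation size of a (regular) term: the number of its distinct subterms. -/
noncomputable def pressize (S : GrammarSig) (T : GTerm S) : ℕ :=
  {T' | SubtermOf S T' T}.ncard

/-- Finite terms over the signature `S`. -/
inductive FTerm (S : GrammarSig) where
  | var : ℕ → FTerm S
  | app : (A : Fin S.ntCount) → (Fin (S.arity A) → FTerm S) → FTerm S

/-- The (finite or infinite) term corresponding to a finite term. -/
def FTerm.toTerm {S : GrammarSig} : FTerm S → GTerm S
  | .var n => GTerm.var S n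
  | .app A c => GTerm.app A (fun i => (c i).toTerm)

/-- The variable `x_n` occurs in the finite term `E`. -/
def FTerm.VOccurs {S : GrammarSig} (n : ℕ) : FTerm S → Prop
  | .var m => m = n
  | .app _ c => ∃ i, (c i).VOccurs n

/-- The depth of a finite term (the largest depth of a subterm occurrence). -/
def FTerm.depth {S : GrammarSig} : FTerm S → ℕ
  | .var _ => 0
  | .app _ c => Finset.univ.sup fun i => (c i).depth + 1

/-- A rule `A(x_0, …, x_{m−1}) →ₐ E` of a first-order grammar: `E` is a finite term
all of whose variables are among `x_0, …, x_{m−1}` where `m = arity A`. -/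
structure GRule (S : GrammarSig) where
  nt : Fin S.ntCount
  act : Fin S.actCount
  rhs : FTerm S
  rhs_wf : ∀ n : ℕ, rhs.VOccurs n → n < S.arity nt

/-- A first-order grammar: a signature together with a finite set (list) of rules. -/
structure FOGrammar where
  sig : GrammarSig
  rules : List (GRule sig)

/-- The term `A(x_0, …, x_{m−1})` (the left-hand side of rules for `A`). -/
def lhsTerm {S : GrammarSig} (A : Fin S.ntCount) : GTerm S :=
  GTerm.app A fun i => GTerm.var S i.val

/-- A labelled transition system with states `S` and actions `A`. -/
structure LTS (S : Type*) (A : Type*) where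
  Tr : A → S → S → Prop

namespace LTS

variable {S A : Type*}

/-- An LTS is image-finite if each state has finitely many `a`-successors. -/
def ImageFinite (L : LTS S A) : Prop := ∀ a s, {t | L.Tr a s t}.Finite

/-- A set `B` of pairs of states covers the pair `p`. -/
def Covers (L : LTS S A) (B : Set (S × S)) (p : S × S) : Prop :=
  (∀ a s', L.Tr a p.1 s' → ∃ t', L.Tr a p.2 t' ∧ (s', t') ∈ B) ∧
  (∀ a t', L.Tr a p.2 t' → ∃ s', L.Tr a p.1 s' ∧ (s', t') ∈ B)

/-- `B'` covers the set `B` (i.e., covers each of its pairs). -/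
def CoversSet (L : LTS S A) (B' B : Set (S × S)) : Prop := ∀ p ∈ B, L.Covers B' p

/-- `B ⊐ B'`: `B'` is a minimal expansion for `B`. -/
def MinExp (L : LTS S A) (B B' : Set (S × S)) : Prop :=
  L.CoversSet B' B ∧ ∀ B'', B'' ⊂ B' → ¬ L.CoversSet B'' B

/-- The stratified equivalences: `∼_0` is everything, `∼_{k+1}` are the pairs covered by `∼_k`. -/
def simN (L : LTS S A) : ℕ → Set (S × S)
  | 0 => Set.univ
  | k + 1 => {p | L.Covers (L.simN k) p}

/-- `eqlevel(s,t) ∈ ℕ ∪ {ω}`: the largest `e` with `s ∼_e t` (`⊤` plays the role of `ω`,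
meaning `s ∼_k t` for all `k ∈ ℕ`). -/
noncomputable def eqlevel (L : LTS S A) (s t : S) : ℕ∞ :=
  sSup {e : ℕ∞ | ∃ k : ℕ, e = (k : ℕ∞) ∧ (s, t) ∈ L.simN k}

/-- `LeastEqLev(B) = min {eqlevel(s,t) | (s,t) ∈ B}`, with `min ∅ = ω = ⊤`. -/
noncomputable def leastEqLev (L : LTS S A) (B : Set (S × S)) : ℕ∞ :=
  sInf {e : ℕ∞ | ∃ p ∈ B, e = L.eqlevel p.1 p.2}

/-- `B` is a bisimulation if it covers itself. -/
def Bisimulation (L : LTS S A) (B : Set (S × S)) : Prop := L.CoversSet B B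

/-- `s ∼ t`: some bisimulation contains `(s,t)`. -/
def Bisim (L : LTS S A) (s t : S) : Prop := ∃ B, L.Bisimulation B ∧ (s, t) ∈ B

end LTS

/-- The rule-based LTS `L^rul_G`: states are the terms, actions are the rules of `G`,
and a rule `r : A(x_0,…,x_{m−1}) →ₐ E` induces `(A(x_0,…,x_{m−1}))σ →r Eσ` for every
substitution `σ`. -/
def LTSrul (G : FOGrammar) : LTS (GTerm G.sig) (GRule G.sig) where
  Tr r T T' := r ∈ G.rules ∧ ∃ σ : ℕ → GTerm G.sig, FinSupp σ ∧
    T = GTerm.subst σ (lhsTerm r.nt) ∧ T' = GTerm.subst σ r.rhs.toTerm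

/-- The action-based LTS `L^act_G`: the transitions of `L^rul_G` relabelled by the
actions of the rules; in addition each variable `x_n` has its own fresh action
(represented by `Sum.inr n`) with the single transition `x_n →_{a_{x_n}} x_n`. -/
def LTSact (G : FOGrammar) : LTS (GTerm G.sig) (Fin G.sig.actCount ⊕ ℕ) where
  Tr a T T' :=
    match a with
    | Sum.inl a => ∃ r : GRule G.sig, r.act = a ∧ (LTSrul G).Tr r T T'
    | Sum.inr n => T = GTerm.var G.sig n ∧ T' = GTerm.var G.sig n

/-- `RPath G T w T'`: the path `T →w T'` in the rule-based LTS `L^rul_G`, `w ∈ R*`. -/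
inductive RPath (G : FOGrammar) : GTerm G.sig → List (GRule G.sig) → GTerm G.sig → Prop
  | nil (T : GTerm G.sig) : RPath G T [] T
  | cons {T T1 T' : GTerm G.sig} {r : GRule G.sig} {w : List (GRule G.sig)} :
      (LTSrul G).Tr r T T1 → RPath G T1 w T' → RPath G T (r :: w) T'

/-- `APath G T w T'`: the path `T →w T'` in the action-based LTS `L^act_G` for a word
`w ∈ Act*` of proper actions (using no special variable transitions). -/
inductive APath (G : FOGrammar) :
    GTerm G.sig → List (Fin G.sig.actCount) → GTerm G.sig → Prop
  | nil (T : GTerm G.sig) : APath G T [] T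
  | cons {T T1 T' : GTerm G.sig} {a : Fin G.sig.actCount} {w : List (Fin G.sig.actCount)} :
      (LTSact G).Tr (Sum.inl a) T T1 → APath G T1 w T' → APath G T (a :: w) T'

namespace GTerm

variable {S : GrammarSig}

/-- The step function of the corecursion defining `subst`; the flag is `false` on subterms
of some `σ n`, which are copied unchanged. -/
def substStep (σ : ℕ → GTerm S) (st : Bool × GTerm S) : S.P (Bool × GTerm S) :=
  match PFunctor.M.dest st.2 with
  | ⟨Sum.inl A, c⟩ => ⟨Sum.inl A, fun i => (st.1, c i)⟩
  | ⟨Sum.inr n, _⟩ =>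
    if st.1 then
      ⟨(PFunctor.M.dest (σ n)).1, fun i => (false, (PFunctor.M.dest (σ n)).2 i)⟩
    else ⟨Sum.inr n, fun e => e.elim⟩

theorem subst_eq_corec (σ : ℕ → GTerm S) (T : GTerm S) :
    subst σ T = PFunctor.M.corec (substStep σ) (true, T) := rfl

theorem dest_var (n : ℕ) : PFunctor.M.dest (var S n) = ⟨Sum.inr n, fun e => e.elim⟩ :=
  PFunctor.M.dest_mk _

theorem dest_app (A : Fin S.ntCount) (c : Fin (S.arity A) → GTerm S) :
    PFunctor.M.dest (app A c) = ⟨Sum.inl A, c⟩ :=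
  PFunctor.M.dest_mk _

theorem var_or_app (T : GTerm S) : (∃ n, T = var S n) ∨ ∃ A c, T = app A c := by
  rw [← PFunctor.M.mk_dest T]
  rcases PFunctor.M.dest T with ⟨A | n, c⟩
  · exact Or.inr ⟨A, c, rfl⟩
  · exact Or.inl ⟨n, congrArg PFunctor.M.mk (Sigma.ext rfl (heq_of_eq (funext nofun)))⟩

theorem var_ne_app {n : ℕ} {A : Fin S.ntCount} {c : Fin (S.arity A) → GTerm S} :
    var S n ≠ app A c := fun h => by
  simpa [dest_var, dest_app] using congrArg (fun T => (PFunctor.M.dest T).1) h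

theorem app_inj {A B : Fin S.ntCount} {c : Fin (S.arity A) → GTerm S}
    {d : Fin (S.arity B) → GTerm S} (h : app A c = app B d) : A = B ∧ HEq c d := by
  have h' := congrArg PFunctor.M.dest h
  rw [dest_app, dest_app] at h'
  obtain ⟨hA, hc⟩ := Sigma.mk.inj h'
  exact ⟨Sum.inl_injective hA, hc⟩

theorem corec_substStep_false (σ : ℕ → GTerm S) (T : GTerm S) :
    PFunctor.M.corec (substStep σ) (false, T) = T := by
  refine PFunctor.M.bisim (fun x y => x = PFunctor.M.corec (substStep σ) (false, y)) ?_ _ _ rfl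
  rintro _ y rfl
  rw [PFunctor.M.dest_corec]
  rcases var_or_app y with ⟨n, rfl⟩ | ⟨A, c, rfl⟩
  · refine ⟨Sum.inr n, fun e => e.elim, fun e => e.elim, ?_, dest_var n, nofun⟩
    simp only [substStep, dest_var, Bool.false_eq_true, reduceIte]
    exact Sigma.ext rfl (heq_of_eq (funext nofun))
  · exact ⟨Sum.inl A, _, c, by simp only [substStep, dest_app]; rfl, dest_app A c, fun _ => rfl⟩

@[simp]
theorem subst_var (σ : ℕ → GTerm S) (n : ℕ) : subst σ (var S n) = σ n := by
  rw [← PFunctor.M.mk_dest (subst σ (var S n)), ← PFunctor.M.mk_dest (σ n), subst_eq_corec,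
    PFunctor.M.dest_corec]
  simp only [substStep, dest_var, reduceIte, PFunctor.map_eq]
  exact congrArg PFunctor.M.mk
    (Sigma.ext rfl (heq_of_eq (funext fun i => corec_substStep_false σ _)))

@[simp]
theorem subst_app (σ : ℕ → GTerm S) (A : Fin S.ntCount) (c : Fin (S.arity A) → GTerm S) :
    subst σ (app A c) = app A (fun i => subst σ (c i)) := by
  rw [← PFunctor.M.mk_dest (subst σ (app A c))]
  rfl

theorem subst_subst (σ τ : ℕ → GTerm S) (T : GTerm S) :
    subst σ (subst τ T) = subst (fun n => subst σ (τ n)) T := by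
  refine PFunctor.M.bisim (fun x y =>
    (∃ T, x = subst σ (subst τ T) ∧ y = subst (fun n => subst σ (τ n)) T) ∨ x = y)
    ?_ _ _ (Or.inl ⟨T, rfl, rfl⟩)
  rintro x y (⟨T, rfl, rfl⟩ | rfl)
  · rcases var_or_app T with ⟨n, rfl⟩ | ⟨A, c, rfl⟩
    · simp only [subst_var]
      exact ⟨_, _, _, rfl, rfl, fun _ => Or.inr rfl⟩
    · simp only [subst_app]
      exact ⟨Sum.inl A, _, _, dest_app _ _, dest_app _ _, fun i => Or.inl ⟨c i, rfl, rfl⟩⟩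
  · exact ⟨_, _, _, rfl, rfl, fun _ => Or.inr rfl⟩

theorem subst_congr {σ τ : ℕ → GTerm S} (E : FTerm S) (h : ∀ n, E.VOccurs n → σ n = τ n) :
    subst σ E.toTerm = subst τ E.toTerm := by
  induction E with
  | var n => simpa [FTerm.toTerm] using h n rfl
  | app A c ih =>
    simp only [FTerm.toTerm, subst_app]
    exact congrArg (app A) (funext fun i => ih i fun n hn => h n ⟨i, hn⟩)

noncomputable def argSubst {A : Fin S.ntCount} (c : Fin (S.arity A) → GTerm S) : ℕ → GTerm S :=
  fun n => if h : n < S.arity A then c ⟨n, h⟩ else var S n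

theorem finSupp_argSubst {A : Fin S.ntCount} (c : Fin (S.arity A) → GTerm S) :
    FinSupp (argSubst c) :=
  (Set.finite_Iio (S.arity A)).subset fun n hn => by
    by_contra h
    exact hn (dif_neg h)

theorem subst_lhsTerm (σ : ℕ → GTerm S) (A : Fin S.ntCount) :
    subst σ (lhsTerm A) = app A (fun i => σ i) := by
  simp [lhsTerm]

theorem subst_argSubst_lhsTerm {A : Fin S.ntCount} (c : Fin (S.arity A) → GTerm S) :
    subst (argSubst c) (lhsTerm A) = app A c := by
  simp [subst_lhsTerm, argSubst]

theorem subst_subst_argSubst (σ : ℕ → GTerm S) {A : Fin S.ntCount}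
    (c : Fin (S.arity A) → GTerm S) (E : FTerm S) (hE : ∀ n, E.VOccurs n → n < S.arity A) :
    subst σ (subst (argSubst c) E.toTerm) = subst (argSubst fun i => subst σ (c i)) E.toTerm := by
  rw [subst_subst]
  exact subst_congr E fun n hn => by simp [argSubst, hE n hn]

end GTerm

theorem ENat.exists_eq_natCast_of_lt {x : ℕ∞} {k : ℕ} (h : x < k) : ∃ k' < k, x = k' := by
  lift x to ℕ using ne_top_of_lt h
  exact ⟨x, by exact_mod_cast h, rfl⟩

theorem ENat.sub_le_sub_of_le_add_one {e g : ℕ∞} {k k' : ℕ} (h : e ≤ g + 1) (hk : k' < k) :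
    e - k ≤ g - k' := by
  induction g using ENat.recTopCoe with
  | top => simp
  | coe g =>
    lift e to ℕ using ne_top_of_le_ne_top (by simp) h
    norm_cast at h ⊢
    omega

namespace LTS

variable {St A : Type*} (L : LTS St A)

theorem simN_succ_subset : ∀ k : ℕ, L.simN (k + 1) ⊆ L.simN k
  | 0 => Set.subset_univ _
  | k + 1 => fun _ ⟨hfwd, hbwd⟩ =>
    ⟨fun a s' hs' => (hfwd a s' hs').imp fun _ ⟨ht', hmem⟩ => ⟨ht', simN_succ_subset k hmem⟩,
      fun a t' ht' => (hbwd a t' ht').imp fun _ ⟨hs', hmem⟩ => ⟨hs', simN_succ_subset k hmem⟩⟩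

theorem simN_anti : Antitone L.simN :=
  antitone_nat_of_succ_le L.simN_succ_subset

theorem simN_refl (k : ℕ) (s : St) : (s, s) ∈ L.simN k := by
  induction k generalizing s with
  | zero => trivial
  | succ k ih => exact ⟨fun _ s' hs' => ⟨s', hs', ih s'⟩, fun _ t' ht' => ⟨t', ht', ih t'⟩⟩

theorem simN_symm {k : ℕ} {s t : St} (h : (s, t) ∈ L.simN k) : (t, s) ∈ L.simN k := by
  induction k generalizing s t with
  | zero => trivial
  | succ k ih =>
    exact ⟨fun a t' ht' => (h.2 a t' ht').imp fun _ ⟨hs', hmem⟩ => ⟨hs', ih hmem⟩,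
      fun a s' hs' => (h.1 a s' hs').imp fun _ ⟨ht', hmem⟩ => ⟨ht', ih hmem⟩⟩

theorem natCast_le_eqlevel_iff {s t : St} {m : ℕ} :
    (m : ℕ∞) ≤ L.eqlevel s t ↔ (s, t) ∈ L.simN m := by
  refine ⟨fun h => ?_, fun h => le_sSup ⟨m, rfl, h⟩⟩
  rcases m with - | m
  · trivial
  rw [Nat.cast_succ, ENat.add_one_le_iff (ENat.natCast_ne_top m)] at h
  obtain ⟨_, ⟨k, rfl, hk⟩, hmk⟩ := lt_sSup_iff.mp h
  exact L.simN_anti (by exact_mod_cast hmk : m < k) hk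

theorem eqlevel_lt_natCast_iff {s t : St} {m : ℕ} :
    L.eqlevel s t < m ↔ (s, t) ∉ L.simN m := by
  rw [← L.natCast_le_eqlevel_iff, not_le]

theorem mem_simN_one_of_natCast_lt {s t : St} {k : ℕ} (h : (k : ℕ∞) < L.eqlevel s t) :
    (s, t) ∈ L.simN 1 :=
  L.natCast_le_eqlevel_iff.mp (Order.one_le_iff_pos.mpr (zero_le.trans_lt h))

theorem eqlevel_self (s : St) : L.eqlevel s s = ⊤ :=
  ENat.eq_top_iff_forall_ge.mpr fun m => L.natCast_le_eqlevel_iff.mpr (L.simN_refl m s)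

theorem eqlevel_comm (s t : St) : L.eqlevel s t = L.eqlevel t s := by
  simp only [eqlevel]
  congr 1
  ext e
  exact ⟨fun ⟨k, he, hk⟩ => ⟨k, he, L.simN_symm hk⟩, fun ⟨k, he, hk⟩ => ⟨k, he, L.simN_symm hk⟩⟩

theorem exists_unmatched_of_not_mem_simN_succ {s t : St} {k : ℕ}
    (h : (s, t) ∉ L.simN (k + 1)) :
    (∃ a s', L.Tr a s s' ∧ ∀ t', L.Tr a t t' → (s', t') ∉ L.simN k) ∨
      ∃ a t', L.Tr a t t' ∧ ∀ s', L.Tr a s s' → (t', s') ∉ L.simN k := by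
  change ¬ L.Covers (L.simN k) (s, t) at h
  rw [Covers, not_and_or] at h
  push Not at h
  exact h.imp id fun ⟨a, t', ht', hs⟩ =>
    ⟨a, t', ht', fun s' hs' hmem => hs s' hs' (L.simN_symm hmem)⟩

/-- Image-finiteness lets a single successor `t'` match `s'` at every level below
`eqlevel s t`. -/
theorem exists_tr_eqlevel_le_add_one (hL : L.ImageFinite) {a : A} {s s' t : St}
    (hs : L.Tr a s s') (hst : (s, t) ∈ L.simN 1) :
    ∃ t', L.Tr a t t' ∧ L.eqlevel s t ≤ L.eqlevel s' t' + 1 := by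
  obtain ⟨t₀, ht₀, -⟩ := hst.1 a s' hs
  obtain ⟨t', ht', hmax⟩ := Set.exists_max_image _ (L.eqlevel s') (hL a t) ⟨t₀, ht₀⟩
  refine ⟨t', ht', ENat.forall_natCast_le_iff_le.mp fun m hm => ?_⟩
  rcases m with - | m
  · simp
  obtain ⟨t'', ht'', hmem⟩ := (L.natCast_le_eqlevel_iff.mp hm).1 a s' hs
  rw [Nat.cast_succ]
  gcongr
  exact (L.natCast_le_eqlevel_iff.mpr hmem).trans (hmax t'' ht'')

end LTS

namespace LTSact

open GTerm

variable {G : FOGrammar}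

theorem tr_inl_app_iff {a : Fin G.sig.actCount} {A : Fin G.sig.ntCount}
    {c : Fin (G.sig.arity A) → GTerm G.sig} {T' : GTerm G.sig} :
    (LTSact G).Tr (Sum.inl a) (app A c) T' ↔
      ∃ r ∈ G.rules, r.act = a ∧ r.nt = A ∧ T' = subst (argSubst c) r.rhs.toTerm := by
  constructor
  · rintro ⟨r, rfl, hr, τ, -, hlhs, rfl⟩
    rw [subst_lhsTerm] at hlhs
    obtain ⟨rfl, hc⟩ := app_inj hlhs
    refine ⟨r, hr, rfl, rfl, subst_congr _ fun n hn => ?_⟩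
    simp [argSubst, r.rhs_wf n hn, eq_of_heq hc]
  · rintro ⟨r, hr, rfl, rfl, rfl⟩
    exact ⟨r, rfl, hr, argSubst c, finSupp_argSubst c, (subst_argSubst_lhsTerm c).symm, rfl⟩

theorem not_tr_inl_var {a : Fin G.sig.actCount} {n : ℕ} {T' : GTerm G.sig} :
    ¬ (LTSact G).Tr (Sum.inl a) (var G.sig n) T' := by
  rintro ⟨r, -, -, τ, -, hlhs, -⟩
  rw [subst_lhsTerm] at hlhs
  exact var_ne_app hlhs

theorem not_tr_inr_app {m : ℕ} {A : Fin G.sig.ntCount} {c : Fin (G.sig.arity A) → GTerm G.sig}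
    {T' : GTerm G.sig} : ¬ (LTSact G).Tr (Sum.inr m) (app A c) T' :=
  fun h => var_ne_app h.1.symm

theorem imageFinite (G : FOGrammar) : (LTSact G).ImageFinite := by
  rintro (a | n) T
  · obtain ⟨n, rfl⟩ | ⟨A, c, rfl⟩ := T.var_or_app
    · exact Set.finite_empty.subset fun _ h => not_tr_inl_var h
    · refine (G.rules.finite_toSet.image fun r => subst (argSubst c) r.rhs.toTerm).subset ?_
      intro T' h
      obtain ⟨r, hr, -, -, rfl⟩ := tr_inl_app_iff.mp h
      exact ⟨r, hr, rfl⟩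
  · exact (Set.finite_singleton (var G.sig n)).subset fun _ h => h.2

theorem tr_subst {a : Fin G.sig.actCount} {A : Fin G.sig.ntCount}
    {c : Fin (G.sig.arity A) → GTerm G.sig} {T' : GTerm G.sig} (σ : ℕ → GTerm G.sig)
    (h : (LTSact G).Tr (Sum.inl a) (app A c) T') :
    (LTSact G).Tr (Sum.inl a) (subst σ (app A c)) (subst σ T') := by
  obtain ⟨r, hr, rfl, rfl, rfl⟩ := tr_inl_app_iff.mp h
  rw [subst_app, tr_inl_app_iff]
  exact ⟨r, hr, rfl, rfl, subst_subst_argSubst σ c _ r.rhs_wf⟩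

theorem exists_tr_of_tr_subst {a : Fin G.sig.actCount} {A : Fin G.sig.ntCount}
    {c : Fin (G.sig.arity A) → GTerm G.sig} {U : GTerm G.sig} (σ : ℕ → GTerm G.sig)
    (h : (LTSact G).Tr (Sum.inl a) (subst σ (app A c)) U) :
    ∃ T', (LTSact G).Tr (Sum.inl a) (app A c) T' ∧ U = subst σ T' := by
  rw [subst_app, tr_inl_app_iff] at h
  obtain ⟨r, hr, rfl, rfl, rfl⟩ := h
  exact ⟨_, tr_inl_app_iff.mpr ⟨r, hr, rfl, rfl, rfl⟩, (subst_subst_argSubst σ c _ r.rhs_wf).symm⟩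

/-- Only `x_i` itself can answer the fresh action `a_{x_i}`. -/
theorem eq_var_of_mem_simN_one {i : ℕ} {T : GTerm G.sig}
    (h : (var G.sig i, T) ∈ (LTSact G).simN 1) : T = var G.sig i :=
  let ⟨_, hT, _⟩ := h.1 (Sum.inr i) _ ⟨rfl, rfl⟩
  hT.1

end LTSact

section Equations

open GTerm

variable {G : FOGrammar} {σ : ℕ → GTerm G.sig}

def ExposesEquation (G : FOGrammar) (σ : ℕ → GTerm G.sig) (k : ℕ) (E F : GTerm G.sig) :
    Prop :=
  ∃ (i : ℕ) (H : GTerm G.sig) (w : List (Fin G.sig.actCount)),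
    σ i ≠ var G.sig i ∧ H ≠ var G.sig i ∧ w.length ≤ k ∧
    ((APath G E w (var G.sig i) ∧ APath G F w H) ∨
      (APath G E w H ∧ APath G F w (var G.sig i))) ∧
    (LTSact G).eqlevel (subst σ E) (subst σ F) - k ≤ (LTSact G).eqlevel (σ i) (subst σ H)

theorem ExposesEquation.symm {k : ℕ} {E F : GTerm G.sig} (h : ExposesEquation G σ k F E) :
    ExposesEquation G σ k E F := by
  obtain ⟨i, H, w, hσi, hH, hw, hpath, hlevel⟩ := h
  exact ⟨i, H, w, hσi, hH, hw, hpath.symm.imp And.symm And.symm,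
    (LTSact G).eqlevel_comm (subst σ E) _ ▸ hlevel⟩

theorem ExposesEquation.cons {k k' : ℕ} {a : Fin G.sig.actCount} {E F E' F' : GTerm G.sig}
    (h : ExposesEquation G σ k' E' F') (hE : (LTSact G).Tr (Sum.inl a) E E')
    (hF : (LTSact G).Tr (Sum.inl a) F F') (hk : k' < k)
    (hlevel : (LTSact G).eqlevel (subst σ E) (subst σ F) ≤
      (LTSact G).eqlevel (subst σ E') (subst σ F') + 1) :
    ExposesEquation G σ k E F := by
  obtain ⟨i, H, w, hσi, hH, hw, hpath, hlevel'⟩ := h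
  refine ⟨i, H, a :: w, hσi, hH, by simp only [List.length_cons]; omega, ?_,
    (ENat.sub_le_sub_of_le_add_one hlevel hk).trans hlevel'⟩
  exact hpath.imp (fun ⟨pE, pF⟩ => ⟨.cons hE pE, .cons hF pF⟩)
    (fun ⟨pE, pF⟩ => ⟨.cons hE pE, .cons hF pF⟩)

theorem exposesEquation_var_left {k i : ℕ} {F : GTerm G.sig} (hσi : σ i ≠ var G.sig i)
    (hF : F ≠ var G.sig i) : ExposesEquation G σ k (var G.sig i) F :=
  ⟨i, F, [], hσi, hF, Nat.zero_le k, Or.inl ⟨.nil _, .nil _⟩, by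
    rw [subst_var]
    exact tsub_le_self⟩

theorem exposesEquation_of_var {k i : ℕ} {F : GTerm G.sig} (hF : var G.sig i ≠ F)
    (h1 : (subst σ (var G.sig i), subst σ F) ∈ (LTSact G).simN 1) :
    ExposesEquation G σ k (var G.sig i) F := by
  by_cases hσi : σ i = var G.sig i
  · rw [subst_var, hσi] at h1
    have hFσ := LTSact.eq_var_of_mem_simN_one h1
    obtain ⟨j, rfl⟩ | ⟨B, d, rfl⟩ := F.var_or_app
    · rw [subst_var] at hFσ
      exact (exposesEquation_var_left (hFσ ▸ hF) hF).symm
    · exact absurd hFσ.symm (by rw [subst_app]; exact var_ne_app)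
  · exact exposesEquation_var_left hσi hF.symm

theorem exposesEquation_of_unmatched {k : ℕ}
    (ih : ∀ k' < k, ∀ E F : GTerm G.sig, (LTSact G).eqlevel E F = k' →
      (k' : ℕ∞) < (LTSact G).eqlevel (subst σ E) (subst σ F) → ExposesEquation G σ k' E F)
    {a : Fin G.sig.actCount} {A B : Fin G.sig.ntCount} {c : Fin (G.sig.arity A) → GTerm G.sig}
    {d : Fin (G.sig.arity B) → GTerm G.sig} {E' : GTerm G.sig}
    (hE : (LTSact G).Tr (Sum.inl a) (app A c) E')
    (hunmatched : ∀ F', (LTSact G).Tr (Sum.inl a) (app B d) F' → (E', F') ∉ (LTSact G).simN k)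
    (hlt : (k : ℕ∞) < (LTSact G).eqlevel (subst σ (app A c)) (subst σ (app B d))) :
    ExposesEquation G σ k (app A c) (app B d) := by
  obtain ⟨_, hFσ, hlevel⟩ := (LTSact G).exists_tr_eqlevel_le_add_one (LTSact.imageFinite G)
    (LTSact.tr_subst σ hE) ((LTSact G).mem_simN_one_of_natCast_lt hlt)
  obtain ⟨F', hF, rfl⟩ := LTSact.exists_tr_of_tr_subst σ hFσ
  obtain ⟨k', hk', hEF'⟩ :=
    ENat.exists_eq_natCast_of_lt ((LTSact G).eqlevel_lt_natCast_iff.mpr (hunmatched F' hF))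
  have hk : (k : ℕ∞) ≤ (LTSact G).eqlevel (subst σ E') (subst σ F') :=
    (ENat.add_le_add_iff_right ENat.one_ne_top).mp
      (((ENat.add_one_le_iff (ENat.natCast_ne_top k)).mpr hlt).trans hlevel)
  exact (ih k' hk' E' F' hEF' ((Nat.cast_lt.mpr hk').trans_le hk)).cons hE hF hk' hlevel

theorem exposesEquation_of_eqlevel_lt (k : ℕ) : ∀ E F : GTerm G.sig,
    (LTSact G).eqlevel E F = k → (k : ℕ∞) < (LTSact G).eqlevel (subst σ E) (subst σ F) →
    ExposesEquation G σ k E F := by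
  induction k using Nat.strong_induction_on with
  | _ k ih =>
  intro E F hEF hlt
  have hne : E ≠ F := by
    rintro rfl
    exact ENat.top_ne_natCast k (((LTSact G).eqlevel_self E).symm.trans hEF)
  have h1 := (LTSact G).mem_simN_one_of_natCast_lt hlt
  obtain ⟨i, rfl⟩ | ⟨A, c, rfl⟩ := E.var_or_app
  · exact exposesEquation_of_var hne h1
  obtain ⟨j, rfl⟩ | ⟨B, d, rfl⟩ := F.var_or_app
  · exact (exposesEquation_of_var hne.symm ((LTSact G).simN_symm h1)).symm
  have hnot : (app A c, app B d) ∉ (LTSact G).simN (k + 1) :=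
    (LTSact G).eqlevel_lt_natCast_iff.mp (by rw [hEF]; exact_mod_cast k.lt_succ_self)
  rcases (LTSact G).exists_unmatched_of_not_mem_simN_succ hnot with
    ⟨a | m, E', hE, hunmatched⟩ | ⟨a | m, F', hF, hunmatched⟩
  · exact exposesEquation_of_unmatched ih hE hunmatched hlt
  · exact absurd hE LTSact.not_tr_inr_app
  · exact (exposesEquation_of_unmatched ih hF hunmatched
      ((LTSact G).eqlevel_comm (subst σ _) _ ▸ hlt)).symm
  · exact absurd hF LTSact.not_tr_inr_app

end Equations

theorem eqlevel_increase_gives_equation_general (G : FOGrammar) (E F : GTerm G.sig)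
    (σ : ℕ → GTerm G.sig) (k : ℕ) (e : ℕ∞)
    (hEF : (LTSact G).eqlevel E F = (k : ℕ∞))
    (hEFσ : (LTSact G).eqlevel (GTerm.subst σ E) (GTerm.subst σ F) = e)
    (hlt : (k : ℕ∞) < e) :
    ∃ (i : ℕ) (H : GTerm G.sig) (w : List (Fin G.sig.actCount)),
      σ i ≠ GTerm.var G.sig i ∧ H ≠ GTerm.var G.sig i ∧ w.length ≤ k ∧
      ((APath G E w (GTerm.var G.sig i) ∧ APath G F w H) ∨
        (APath G E w H ∧ APath G F w (GTerm.var G.sig i))) ∧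
      e - (k : ℕ∞) ≤ (LTSact G).eqlevel (σ i) (GTerm.subst σ H) := by
  subst hEFσ
  exact exposesEquation_of_eqlevel_lt k E F hEF hlt

/-- if `eqlevel(E,F) = k < e = eqlevel(Eσ,Fσ)`, then there are
`x_i ∈ supp(σ)`, a term `H ≠ x_i`, and a word `w` over `Act` with `|w| ≤ k` such that
(`E →w x_i` and `F →w H`) or (`E →w H` and `F →w x_i`) in `L^act_G` (using no special
variable transitions), and `x_iσ ∼_{e−k} Hσ` (i.e. `eqlevel(x_iσ, Hσ) ≥ e − k`,
with `ω − k = ω`). -/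
theorem eqlevel_increase_gives_equation (G : FOGrammar) (E F : GTerm G.sig)
    (σ : ℕ → GTerm G.sig) (hσ : FinSupp σ) (k : ℕ) (e : ℕ∞)
    (hEF : (LTSact G).eqlevel E F = (k : ℕ∞))
    (hEFσ : (LTSact G).eqlevel (GTerm.subst σ E) (GTerm.subst σ F) = e)
    (hlt : (k : ℕ∞) < e) :
    ∃ (i : ℕ) (H : GTerm G.sig) (w : List (Fin G.sig.actCount)),
      σ i ≠ GTerm.var G.sig i ∧ H ≠ GTerm.var G.sig i ∧ w.length ≤ k ∧
      ((APath G E w (GTerm.var G.sig i) ∧ APath G F w H) ∨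
        (APath G E w H ∧ APath G F w (GTerm.var G.sig i))) ∧
      e - (k : ℕ∞) ≤ (LTSact G).eqlevel (σ i) (GTerm.subst σ H) :=
  eqlevel_increase_gives_equation_general G E F σ k e hEF hEFσ hlt
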